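/- Let n ≥ 2 and 0 ≤ k < n be integers, q* = 2n²/((n−k)(2n−1)), and let 1 < p ≤ q with q > q*·p. Let δ ∈ (0,1) with 1/δ ∈ ℕ, and let M̃^k_{ρ,δ} be a linearized k-skeleton maximal operator built from some ρ : {x_1,…,x_u} → [1,2] ∩ δℤ and a face selection (ℓ^i)_{i=1}^u with the following overlap property for some constant C_0 = C_0(n,k): for every coordinate k-plane π, every subset J ⊆ {1,…,u} such that ℓ^i is parallel to π for all i ∈ J, and every affine translate V of π, #{ i ∈ J : ℓ^i ⊆ V } ≤ C_0 |J|^{1 − (n−k)(2n−1)/(2n²)}. Then there exists C' = C'(k,n,p,q) > 0 such that for every f ∈ L^p(ℝ^n): ‖M̃^k_{ρ,δ} f‖_{L^q(Q_0)} ≤ C' · δ^{n/q + (k−n)/p} · ‖f‖_{L^p(ℝ^n)}. -/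

import Mathlib

open MeasureTheory Metric Set

noncomputable section

/-- A `k`-face of the axis-parallel cube in `ℝⁿ` with center `x` and side length `2r`:
the coordinates `j ∈ S` (with `#S = n - k`) are fixed at `x j ± r` (sign given by `ε j`),
the remaining coordinates range over `[x j - r, x j + r]`. -/
def kFace {n : ℕ} (x : Fin n → ℝ) (r : ℝ) (S : Finset (Fin n)) (ε : Fin n → Bool) :
    Set (Fin n → ℝ) :=
  {y | (∀ j ∈ S, y j = x j + (if ε j then r else -r)) ∧ ∀ j ∉ S, |y j - x j| ≤ r}

/-- The `k`-skeleton `S_k(x,r)` of the axis-parallel cube with center `x` and side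
length `2r`: the union of all its `k`-faces. -/
def skeleton (n k : ℕ) (x : Fin n → ℝ) (r : ℝ) : Set (Fin n → ℝ) :=
  ⋃ (S : Finset (Fin n)) (_ : S.card = n - k) (ε : Fin n → Bool), kFace x r S ε

/-- The `k`-skeleton maximal operator with width `δ`:
`M^k_δ f (x) = sup_{1 ≤ r ≤ 2} min_j ⨍_{S^j_{k,δ}(x,r)} |f|`, the minimum being taken
over all `k`-faces of the cube with center `x` and side length `2r`, each face thickened
by `δ` in the `ℓ∞` metric (which is the sup metric on `Fin n → ℝ`). -/
def skelMax (n k : ℕ) (δ : ℝ) (f : (Fin n → ℝ) → ℝ) (x : Fin n → ℝ) : ℝ :=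
  ⨆ r ∈ Set.Icc (1 : ℝ) 2,
    ⨅ (S : {S : Finset (Fin n) // S.card = n - k}) (ε : Fin n → Bool),
      ⨍ y in cthickening δ (kFace x r S.1 ε), |f y|

/-- The unit cube `Q₀ = [0,1)ⁿ`. -/
def Q0 (n : ℕ) : Set (Fin n → ℝ) := Set.univ.pi fun _ => Set.Ico (0 : ℝ) 1

/-- The cube `7Q₀`, concentric with `Q₀` and of side length `7`. -/
def sevenQ0 (n : ℕ) : Set (Fin n → ℝ) := Set.univ.pi fun _ => Set.Icc (-3 : ℝ) 4

/-- The translate by `v` of the coordinate `k`-plane spanned by the basis vectors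
`e_j`, `j ∈ π`. -/
def planeTranslate {n : ℕ} (π : Finset (Fin n)) (v : Fin n → ℝ) : Set (Fin n → ℝ) :=
  {y | ∀ j ∉ π, y j = v j}

/-- Center of the grid cube indexed by `z` in the grid of width `η` on `Q₀`. -/
def gridCenter {n : ℕ} (η : ℝ) {m : ℕ} (z : Fin n → Fin m) : Fin n → ℝ :=
  fun j => η * ((z j : ℝ) + 1 / 2)

/-- Index of the grid cube of width `η` containing `x` (for `x ∈ Q₀`). -/
def zOf {n : ℕ} (η : ℝ) {m : ℕ} (hm : 0 < m) (x : Fin n → ℝ) : Fin n → Fin m :=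
  fun j => ⟨(⌊x j / η⌋).toNat % m, Nat.mod_lt _ hm⟩

/-- The selected `k`-face `ℓᶻ` of the skeleton `S_k(x_z, ρ z)`, where `x_z` is the center
of the grid cube indexed by `z`. -/
def linFace {n : ℕ} (η : ℝ) {m : ℕ} (ρ : (Fin n → Fin m) → ℝ)
    (S : (Fin n → Fin m) → Finset (Fin n)) (ε : (Fin n → Fin m) → Fin n → Bool)
    (z : Fin n → Fin m) : Set (Fin n → ℝ) :=
  kFace (gridCenter η z) (ρ z) (S z) (ε z)

/-- The linearized `k`-skeleton maximal operator `M̃^k_{ρ,η}` of width `η`: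
for `x` in the grid cube indexed by `z`, it averages `|f|` over the closed
`η`-neighborhood (in the `ℓ∞` metric) of the selected face `ℓᶻ`. -/
def linMax {n : ℕ} (η : ℝ) {m : ℕ} (hm : 0 < m) (ρ : (Fin n → Fin m) → ℝ)
    (S : (Fin n → Fin m) → Finset (Fin n)) (ε : (Fin n → Fin m) → Fin n → Bool)
    (f : (Fin n → ℝ) → ℝ) (x : Fin n → ℝ) : ℝ :=
  ⨍ y in cthickening η (linFace η ρ S ε (zOf η hm x)), |f y|

/-- The overlap property for the selected faces: every affine translate `V` of a coordinate
`k`-plane `π` contains at most `C₀ · (#J)^{1 - (n-k)(2n-1)/(2n²)}` of the faces `ℓᶻ`, `z ∈ J`,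
whenever all the faces indexed by `J` are parallel to `π`. -/
def OverlapProp {n : ℕ} (k : ℕ) (η : ℝ) {m : ℕ} (ρ : (Fin n → Fin m) → ℝ)
    (S : (Fin n → Fin m) → Finset (Fin n)) (ε : (Fin n → Fin m) → Fin n → Bool)
    (C0 : ℝ) : Prop :=
  ∀ π : Finset (Fin n), π.card = k →
    ∀ J : Set (Fin n → Fin m),
      (∀ z ∈ J, ∃ v : Fin n → ℝ, linFace η ρ S ε z ⊆ planeTranslate π v) →
      ∀ v : Fin n → ℝ,
        ({z ∈ J | linFace η ρ S ε z ⊆ planeTranslate π v}).ncard ≤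
          C0 * (J.ncard : ℝ) ^ (1 - ((n : ℝ) - k) * (2 * (n : ℝ) - 1) / (2 * (n : ℝ) ^ 2))

/-- Abstract maximal averaging operator `T f (x) = sup_{r ∈ I} ⨍_{A_{x,r}} |f|`. -/
def absMax {n : ℕ} {I : Type*} (A : (Fin n → ℝ) → I → Set (Fin n → ℝ))
    (f : (Fin n → ℝ) → ℝ) (x : Fin n → ℝ) : ℝ :=
  ⨆ r : I, ⨍ y in A x r, |f y|

/-- `goodCount A E lam μ` says: for at least `m/2` of the indices `j`, the subset of
`A j ∩ E` where the multiplicity function `Υ = Σᵢ 1_{Aᵢ ∩ E}` is at most `μ` has measure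
at least `(lam/2)·|A j|`. -/
def goodCount {n m : ℕ} (A : Fin m → Set (Fin n → ℝ)) (E : Set (Fin n → ℝ))
    (lam : ℝ) (μ : ℕ) : Prop :=
  (m : ℝ) / 2 ≤
    ({j : Fin m | ENNReal.ofReal (lam / 2) * volume (A j) ≤
        volume {y ∈ A j ∩ E | ({i : Fin m | y ∈ A i ∩ E}).ncard ≤ μ}}).ncard

/-!
On the grid cube `Q₀(z)` the operator is the constant `a_z = ⨍_{ℓ_{z,δ}} |f|`, so
`‖M̃f‖_q^q = δⁿ ∑_z a_z^q`. Each `ℓ_{z,δ}` contains a box of volume `2ⁿ δ^{n-k}`, so by Jensen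
`a_z^p ≤ g_z := ∫_{ℓ_{z,δ}} |f|^p / (2ⁿ δ^{n-k})`. By the overlap property a point lies in at most
`6ⁿ C₀ |B|^{1-β}` of the sets `ℓ_{z,δ}`, `z ∈ B`, where `β = 1/q*`; integrating,
`∑_{z ∈ B} g_z ≲ |B|^{1-β} ‖f‖_p^p` for every `B`. Hence the `j`-th largest `g_z` is `≲ j^{-β}`,
and `∑_z g_z^{q/p}` is controlled by the series `∑_j j^{-βq/p}`, which converges because
`q > q* p`. The power of `δ` comes from the normalisation `2ⁿ δ^{n-k}`.
-/

theorem setAverage_abs_nonneg {α : Type*} [MeasurableSpace α] (μ : Measure α) (s : Set α)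
    (f : α → ℝ) : 0 ≤ ⨍ y in s, |f y| ∂μ := by
  rw [setAverage_eq, smul_eq_mul]
  exact mul_nonneg (inv_nonneg.2 measureReal_nonneg) (integral_nonneg fun _ => abs_nonneg _)

theorem setAverage_abs_rpow_le {α : Type*} [MeasurableSpace α] {μ : Measure α} {A : Set α}
    (hA0 : μ A ≠ 0) (hA : μ A ≠ ⊤) {p : ℝ} (hp : 1 ≤ p) {f : α → ℝ}
    (hf : MemLp f (ENNReal.ofReal p) μ) :
    (⨍ y in A, |f y| ∂μ) ^ p ≤ (μ.real A)⁻¹ * ∫ y in A, |f y| ^ p ∂μ := by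
  have : IsFiniteMeasure (μ.restrict A) := isFiniteMeasure_restrict.2 hA
  have hfA := hf.restrict A
  have hint : IntegrableOn (fun y => |f y|) A μ :=
    (hfA.integrable (ENNReal.one_le_ofReal.2 hp)).abs
  have hintp : IntegrableOn (fun y => |f y| ^ p) A μ := by
    have := hfA.integrable_norm_rpow'
    rwa [ENNReal.toReal_ofReal (zero_le_one.trans hp)] at this
  rw [← smul_eq_mul, ← setAverage_eq]
  exact (convexOn_rpow hp).map_set_average_le
    (Real.continuous_rpow_const (zero_le_one.trans hp)).continuousOn isClosed_Ici hA0 hA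
    (ae_of_all _ fun y => abs_nonneg (f y)) hint hintp

open Finset Classical in
theorem sum_setIntegral_le_mul_integral {ι α : Type*} [MeasurableSpace α] {μ : Measure α}
    {A : ι → Set α} (hA : ∀ i, MeasurableSet (A i)) {φ : α → ℝ} (hφ0 : ∀ y, 0 ≤ φ y)
    (hφ : Integrable φ μ) (B : Finset ι) {c : ℝ}
    (hc : ∀ y, (#{i ∈ B | y ∈ A i} : ℝ) ≤ c) :
    ∑ i ∈ B, ∫ y in A i, φ y ∂μ ≤ c * ∫ y, φ y ∂μ := by
  have hmult : ∀ y, ∑ i ∈ B, (A i).indicator φ y ≤ c * φ y := fun y => by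
    simp only [Set.indicator_apply, sum_ite, sum_const_zero, add_zero, sum_const, nsmul_eq_mul]
    exact mul_le_mul_of_nonneg_right (hc y) (hφ0 y)
  calc ∑ i ∈ B, ∫ y in A i, φ y ∂μ = ∫ y, ∑ i ∈ B, (A i).indicator φ y ∂μ := by
        rw [integral_finsetSum _ fun i _ => hφ.indicator (hA i)]
        simp only [integral_indicator (hA _)]
    _ ≤ ∫ y, c * φ y ∂μ :=
        integral_mono_of_nonneg (ae_of_all _ fun y => sum_nonneg fun i _ =>
          Set.indicator_nonneg (fun y _ => hφ0 y) y) (hφ.const_mul c) (ae_of_all _ hmult)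
    _ = c * ∫ y, φ y ∂μ := integral_const_mul c _

open Finset in
theorem sum_rpow_le_of_forall_sum_le {ι : Type*} {g : ι → ℝ} (hg : ∀ i, 0 ≤ g i)
    {D β r : ℝ} (hD : 0 ≤ D) (hr : 0 < r)
    (H : ∀ B : Finset ι, ∑ i ∈ B, g i ≤ D * (#B : ℝ) ^ (1 - β)) (A : Finset ι) :
    ∑ i ∈ A, g i ^ r ≤ D ^ r * ∑ j ∈ range #A, ((j : ℝ) + 1) ^ (-(r * β)) := by
  classical
  induction hA : #A generalizing A with
  | zero => simp_all
  | succ N ih =>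
    obtain ⟨i, hiA, hmin⟩ := A.exists_min_image g (card_pos.1 (by omega))
    have hA0 : (0 : ℝ) < #A := by rw [hA]; positivity
    -- the smallest of `#A` values is at most their mean
    have hgi : g i ≤ D * (#A : ℝ) ^ (-β) := by
      have hmean : (#A : ℝ) * g i ≤ (#A : ℝ) * (D * (#A : ℝ) ^ (-β)) := by
        calc (#A : ℝ) * g i ≤ ∑ j ∈ A, g j := by
              simpa using card_nsmul_le_sum A g (g i) hmin
          _ ≤ D * (#A : ℝ) ^ (1 - β) := H A
          _ = (#A : ℝ) * (D * (#A : ℝ) ^ (-β)) := by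
              rw [sub_eq_add_neg, Real.rpow_add hA0, Real.rpow_one]; ring
      exact le_of_mul_le_mul_left hmean hA0
    have hgir : g i ^ r ≤ D ^ r * ((N : ℝ) + 1) ^ (-(r * β)) :=
      calc g i ^ r ≤ (D * (#A : ℝ) ^ (-β)) ^ r := Real.rpow_le_rpow (hg i) hgi hr.le
        _ = D ^ r * ((N : ℝ) + 1) ^ (-(r * β)) := by
          rw [Real.mul_rpow hD (by positivity), ← Real.rpow_mul hA0.le, hA]
          push_cast; ring_nf
    calc ∑ j ∈ A, g j ^ r = g i ^ r + ∑ j ∈ A.erase i, g j ^ r := (add_sum_erase A _ hiA).symm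
      _ ≤ D ^ r * ((N : ℝ) + 1) ^ (-(r * β)) +
          D ^ r * ∑ j ∈ range N, ((j : ℝ) + 1) ^ (-(r * β)) :=
        add_le_add hgir (ih _ (by rw [card_erase_of_mem hiA, hA]; rfl))
      _ = D ^ r * ∑ j ∈ range (N + 1), ((j : ℝ) + 1) ^ (-(r * β)) := by
        rw [sum_range_succ]; ring

open Finset Classical in
theorem sum_setAverage_rpow_le {ι α : Type*} [Fintype ι] [MeasurableSpace α] {μ : Measure α}
    {A : ι → Set α} (hA : ∀ i, MeasurableSet (A i)) (hA_top : ∀ i, μ (A i) ≠ ⊤)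
    {w : ℝ} (hw : 0 < w) (hAw : ∀ i, ENNReal.ofReal w ≤ μ (A i)) {M β : ℝ} (hM : 0 ≤ M)
    (hmult : ∀ (B : Finset ι) (y : α), (#{i ∈ B | y ∈ A i} : ℝ) ≤ M * (#B : ℝ) ^ (1 - β))
    {p r : ℝ} (hp : 1 ≤ p) (hr : 0 < r) {f : α → ℝ} (hf : MemLp f (ENNReal.ofReal p) μ) :
    ∑ i, (⨍ y in A i, |f y| ∂μ) ^ (p * r) ≤
      (M * (∫ y, |f y| ^ p ∂μ) / w) ^ r *
        ∑ j ∈ range (Fintype.card ι), ((j : ℝ) + 1) ^ (-(r * β)) := by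
  set g : ι → ℝ := fun i => (∫ y in A i, |f y| ^ p ∂μ) / w
  have hfp : Integrable (fun y => |f y| ^ p) μ := by
    have := hf.integrable_norm_rpow (by simp; linarith) ENNReal.ofReal_ne_top
    rwa [ENNReal.toReal_ofReal (zero_le_one.trans hp)] at this
  have hg : ∀ i, 0 ≤ g i := fun i =>
    div_nonneg (setIntegral_nonneg (hA i) fun y _ => by positivity) hw.le
  have hgB : ∀ B : Finset ι, ∑ i ∈ B, g i ≤ M * (∫ y, |f y| ^ p ∂μ) / w * (#B : ℝ) ^ (1 - β) :=
    fun B => by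
      rw [← sum_div, div_mul_eq_mul_div, mul_right_comm]
      gcongr
      exact sum_setIntegral_le_mul_integral hA (fun y => by positivity) hfp B (hmult B)
  have havg : ∀ i, (⨍ y in A i, |f y| ∂μ) ^ p ≤ g i := fun i => by
    have hwA : w ≤ μ.real (A i) := (ENNReal.ofReal_le_iff_le_toReal (hA_top i)).1 (hAw i)
    have hA0 : μ (A i) ≠ 0 := (lt_of_lt_of_le (ENNReal.ofReal_pos.2 hw) (hAw i)).ne'
    refine (setAverage_abs_rpow_le hA0 (hA_top i) hp hf).trans ?_
    rw [inv_mul_eq_div]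
    exact div_le_div_of_nonneg_left (setIntegral_nonneg (hA i) fun y _ => by positivity) hw hwA
  calc ∑ i, (⨍ y in A i, |f y| ∂μ) ^ (p * r)
      = ∑ i, ((⨍ y in A i, |f y| ∂μ) ^ p) ^ r :=
        sum_congr rfl fun i _ => Real.rpow_mul (setAverage_abs_nonneg _ _ _) p r
    _ ≤ ∑ i, g i ^ r := sum_le_sum fun i _ =>
        Real.rpow_le_rpow (Real.rpow_nonneg (setAverage_abs_nonneg _ _ _) p) (havg i) hr.le
    _ ≤ _ := sum_rpow_le_of_forall_sum_le hg (by positivity) hr hgB univ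

/-- The exponent `β = 1/q*`: the overlap property bounds counts by `C₀ |J|^{1-β}`. -/
def overlapExponent (n k : ℕ) : ℝ := ((n : ℝ) - k) * (2 * (n : ℝ) - 1) / (2 * (n : ℝ) ^ 2)

theorem overlapExponent_le_one (n k : ℕ) : overlapExponent n k ≤ 1 := by
  rcases n.eq_zero_or_pos with rfl | hn
  · simp [overlapExponent]
  have hn' : (1 : ℝ) ≤ n := by exact_mod_cast hn
  rw [overlapExponent, div_le_one (by positivity)]
  nlinarith [(k.cast_nonneg : (0 : ℝ) ≤ k)]

theorem one_lt_div_mul_overlapExponent {n k : ℕ} (hk : k < n) {p q : ℝ} (hp : 0 < p)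
    (hq : 2 * (n : ℝ) ^ 2 / (((n : ℝ) - k) * (2 * (n : ℝ) - 1)) * p < q) :
    1 < q / p * overlapExponent n k := by
  have hkn : (k : ℝ) < n := by exact_mod_cast hk
  have hn : (1 : ℝ) ≤ n := by exact_mod_cast (show 1 ≤ n by omega)
  have hd : 0 < ((n : ℝ) - k) * (2 * (n : ℝ) - 1) := by nlinarith
  rw [div_mul_eq_mul_div, div_lt_iff₀ hd] at hq
  rw [overlapExponent, div_mul_div_comm, one_lt_div (by positivity)]
  nlinarith

theorem overlapExponent_pos {n k : ℕ} (hk : k < n) : 0 < overlapExponent n k := by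
  have hkn : (k : ℝ) < n := by exact_mod_cast hk
  have hn : (1 : ℝ) ≤ n := by exact_mod_cast (show 1 ≤ n by omega)
  unfold overlapExponent
  apply div_pos <;> nlinarith

theorem summable_nat_add_one_rpow_neg {t : ℝ} (ht : 1 < t) :
    Summable fun j : ℕ => ((j : ℝ) + 1) ^ (-t) := by
  simpa using (summable_nat_add_iff 1).2 (Real.summable_nat_rpow.2 (by linarith : -t < -1))

/-- The scaling in `δ` that produces the exponent `n/q + (k-n)/p`. -/
theorem pow_mul_rpow_div_eq {n k : ℕ} (hk : k ≤ n) {δ p q M I K : ℝ} (hδ : 0 < δ) (hp : 0 < p)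
    (hq : 0 < q) (hM : 0 ≤ M) (hI : 0 ≤ I) (hK : 0 ≤ K) :
    δ ^ n * ((M * I / (2 ^ n * δ ^ (n - k))) ^ (q / p) * K) =
      ((K * (M / 2 ^ n) ^ (q / p)) ^ q⁻¹ * δ ^ ((n : ℝ) / q + ((k : ℝ) - n) / p) *
        I ^ p⁻¹) ^ q := by
  have hsplit : M * I / (2 ^ n * δ ^ (n - k)) = M / 2 ^ n * I * (δ ^ ((n : ℝ) - k))⁻¹ := by
    rw [← Nat.cast_sub hk, Real.rpow_natCast]; field_simp
  rw [hsplit, Real.mul_rpow (by positivity) (by positivity), Real.mul_rpow (by positivity) hI,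
    Real.inv_rpow (by positivity), ← Real.rpow_mul hδ.le,
    Real.mul_rpow (by positivity) (by positivity), Real.mul_rpow (by positivity) (by positivity),
    ← Real.rpow_mul (by positivity), ← Real.rpow_mul hδ.le, ← Real.rpow_mul hI,
    inv_mul_cancel₀ hq.ne', Real.rpow_one, inv_mul_eq_div, ← Real.rpow_natCast δ n]
  have hexp : ((n : ℝ) / q + ((k : ℝ) - n) / p) * q = n - (n - k) * (q / p) := by
    field_simp; ring
  rw [hexp, Real.rpow_sub hδ]
  ring

section Faces

variable {n : ℕ} {x : Fin n → ℝ} {r : ℝ} {S : Finset (Fin n)} {ε : Fin n → Bool}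

theorem kFace_subset_planeTranslate {v : Fin n → ℝ}
    (hv : ∀ j ∈ S, v j = x j + if ε j then r else -r) : kFace x r S ε ⊆ planeTranslate Sᶜ v :=
  fun y hy j hj => by rw [hy.1 j (by simpa using hj), hv j (by simpa using hj)]

theorem abs_sub_le_of_mem_cthickening_planeTranslate {π : Finset (Fin n)} {v y : Fin n → ℝ}
    {δ : ℝ} (hδ : 0 ≤ δ) (hy : y ∈ cthickening δ (planeTranslate π v)) {j : Fin n}
    (hj : j ∉ π) : |y j - v j| ≤ δ := by
  have hdist : ENNReal.ofReal |y j - v j| ≤ Metric.infEDist y (planeTranslate π v) :=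
    Metric.le_infEDist.2 fun u hu => by
      rw [← hu j hj, ← Real.dist_eq, ← edist_dist]
      exact edist_le_pi_edist y u j
  exact (ENNReal.ofReal_le_ofReal_iff hδ).1 (hdist.trans (mem_cthickening_iff.1 hy))

theorem isBounded_kFace : Bornology.IsBounded (kFace x r S ε) := by
  refine (Metric.isBounded_closedBall (x := x) (r := |r|)).subset fun y hy => ?_
  rw [Metric.mem_closedBall, dist_pi_le_iff (abs_nonneg r)]
  intro j
  rw [Real.dist_eq]
  by_cases hj : j ∈ S
  · rw [hy.1 j hj]
    split_ifs <;> simp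
  · exact (hy.2 j hj).trans (le_abs_self r)

open Finset in
/-- The neighbourhood contains the box with sides `2δ` across the face and `2 ≤ 2r` along it. -/
theorem ofReal_le_volume_cthickening_kFace {δ : ℝ} (hδ : 0 ≤ δ) (hr : 1 ≤ r) :
    ENNReal.ofReal (2 ^ n * δ ^ #S) ≤ volume (cthickening δ (kFace x r S ε)) := by
  set c : Fin n → ℝ := fun j => x j + if ε j then r else -r
  set a : Fin n → ℝ := fun j => if j ∈ S then c j - δ else x j - 1
  set b : Fin n → ℝ := fun j => if j ∈ S then c j + δ else x j + 1
  have hbox : Icc a b ⊆ cthickening δ (kFace x r S ε) := by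
    intro y hy
    set u : Fin n → ℝ := fun j => if j ∈ S then c j else y j
    have hu : u ∈ kFace x r S ε := by
      refine ⟨fun j hj => if_pos hj, fun j hj => ?_⟩
      have := And.intro (hy.1 j) (hy.2 j)
      simp only [u, a, b, if_neg hj] at this ⊢
      rw [abs_le]; constructor <;> linarith
    refine mem_cthickening_of_dist_le y u δ _ hu ((dist_pi_le_iff hδ).2 fun j => ?_)
    have := And.intro (hy.1 j) (hy.2 j)
    by_cases hj : j ∈ S
    · simp only [u, a, b, if_pos hj] at this ⊢
      rw [Real.dist_eq, abs_le]; constructor <;> linarith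
    · simpa [u, if_neg hj] using hδ
  have hvol : volume (Icc a b) = ENNReal.ofReal (2 ^ n * δ ^ #S) := by
    have hside : ∀ j, ENNReal.ofReal (b j - a j) =
        ENNReal.ofReal 2 * if j ∈ S then ENNReal.ofReal δ else 1 := fun j => by
      by_cases hj : j ∈ S
      · simp only [a, b, if_pos hj, ← ENNReal.ofReal_mul zero_le_two]; ring_nf
      · simp only [a, b, if_neg hj, mul_one]; ring_nf
    rw [Real.volume_Icc_pi, prod_congr rfl fun j _ => hside j, prod_mul_distrib, prod_const,
      prod_ite_mem, Finset.univ_inter, prod_const, card_univ, Fintype.card_fin,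
      ENNReal.ofReal_mul (by positivity), ENNReal.ofReal_pow zero_le_two,
      ENNReal.ofReal_pow hδ]
  exact hvol ▸ measure_mono hbox

end Faces

theorem mem_Icc_ceil_of_abs_sub_le {δ t : ℝ} (hδ : 0 < δ) {M : ℤ}
    (h : |t - δ * (M + 1 / 2)| ≤ δ) :
    M ∈ Finset.Icc ⌈t / δ - 3 / 2⌉ (⌈t / δ - 3 / 2⌉ + 2) := by
  rw [abs_le] at h
  have hlo : t / δ - 3 / 2 ≤ M := by
    rw [sub_le_iff_le_add, div_le_iff₀ hδ]; linarith
  have hhi : (M : ℝ) - 1 / 2 ≤ t / δ := by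
    rw [le_div_iff₀ hδ]; linarith
  have hceil := Int.le_ceil (t / δ - 3 / 2)
  have hlt : (M : ℝ) < ⌈t / δ - 3 / 2⌉ + 3 := by linarith
  have hlt' : M < ⌈t / δ - 3 / 2⌉ + 3 := by exact_mod_cast hlt
  exact Finset.mem_Icc.2 ⟨Int.ceil_le.2 hlo, by omega⟩

section LinearizedFaces

variable {n k : ℕ} {δ : ℝ} {m : ℕ} {ρ : (Fin n → Fin m) → ℝ}
  {S : (Fin n → Fin m) → Finset (Fin n)} {ε : (Fin n → Fin m) → Fin n → Bool} {C0 : ℝ}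

open Finset Classical in
theorem OverlapProp.card_filter_subset_planeTranslate_le (hov : OverlapProp k δ ρ S ε C0)
    (hC0 : 0 ≤ C0) (hk : k ≤ n) {σ : Finset (Fin n)} (hσ : #σ = n - k) (u : Fin n → ℝ)
    (B : Finset (Fin n → Fin m)) :
    (#{z ∈ B | S z = σ ∧ linFace δ ρ S ε z ⊆ planeTranslate σᶜ u} : ℝ) ≤
      C0 * (#B : ℝ) ^ (1 - overlapExponent n k) := by
  set J : Set (Fin n → Fin m) := {z | z ∈ B ∧ S z = σ}
  have hJ : ∀ z ∈ J, ∃ v, linFace δ ρ S ε z ⊆ planeTranslate σᶜ v := fun z hz =>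
    ⟨_, by rw [← hz.2]; exact kFace_subset_planeTranslate fun j _ => rfl⟩
  have hπ : #σᶜ = k := by rw [card_compl, Fintype.card_fin, hσ]; omega
  have hJB : J.ncard ≤ #B := by
    rw [← Set.ncard_coe_finset B]
    exact Set.ncard_le_ncard (fun z hz => hz.1) B.finite_toSet
  calc (#{z ∈ B | S z = σ ∧ linFace δ ρ S ε z ⊆ planeTranslate σᶜ u} : ℝ)
      = ({z ∈ J | linFace δ ρ S ε z ⊆ planeTranslate σᶜ u}).ncard := by
        rw [← Set.ncard_coe_finset]; congr 2; ext z; simp [J, and_assoc]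
    _ ≤ C0 * (J.ncard : ℝ) ^ (1 - overlapExponent n k) := hov σᶜ hπ J hJ u
    _ ≤ C0 * (#B : ℝ) ^ (1 - overlapExponent n k) := by
        gcongr
        exact sub_nonneg.2 (overlapExponent_le_one n k)

open Finset Classical in
/-- A point `y` pins each fixed coordinate of a face whose `δ`-neighbourhood contains it to one
of three values of `δ (ℤ + 1/2)`; so these faces fall into at most `2ⁿ 3ⁿ` classes, each
lying in a single translate of a coordinate `k`-plane. -/
theorem card_filter_mem_cthickening_linFace_le (hk : k ≤ n) (hδ : 0 < δ)
    (hρ : ∀ z, ∃ t : ℤ, ρ z = δ * t) (hS : ∀ z, #(S z) = n - k) (hC0 : 0 ≤ C0)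
    (hov : OverlapProp k δ ρ S ε C0) (B : Finset (Fin n → Fin m)) (y : Fin n → ℝ) :
    (#{z ∈ B | y ∈ cthickening δ (linFace δ ρ S ε z)} : ℝ) ≤
      6 ^ n * C0 * (#B : ℝ) ^ (1 - overlapExponent n k) := by
  choose t ht using hρ
  set c : (Fin n → Fin m) → Fin n → ℤ := fun z j => (z j : ℤ) + if ε z j then t z else -t z
  have hc : ∀ z j, δ * ((c z j : ℝ) + 1 / 2) =
      gridCenter δ z j + if ε z j then ρ z else -ρ z := fun z j => by
    simp only [c, gridCenter, ht]; split_ifs <;> push_cast <;> ring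
  set M₀ : Fin n → ℤ := fun j => ⌈y j / δ - 3 / 2⌉
  set key : (Fin n → Fin m) → Finset (Fin n) × (Fin n → ℤ) :=
    fun z => (S z, fun j => if j ∈ S z then c z j else M₀ j)
  set T := B.filter fun z => y ∈ cthickening δ (linFace δ ρ S ε z)
  set target := (univ.filter fun σ : Finset (Fin n) => #σ = n - k) ×ˢ
    Fintype.piFinset fun j => Icc (M₀ j) (M₀ j + 2)
  have hmaps : ∀ z ∈ T, key z ∈ target := fun z hz => by
    refine mem_product.2 ⟨by simpa using hS z, Fintype.mem_piFinset.2 fun j => ?_⟩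
    simp only [key]
    split_ifs with hj
    · have hface : linFace δ ρ S ε z ⊆
          planeTranslate (S z)ᶜ fun j => δ * ((c z j : ℝ) + 1 / 2) :=
        kFace_subset_planeTranslate fun j _ => hc z j
      exact mem_Icc_ceil_of_abs_sub_le hδ (abs_sub_le_of_mem_cthickening_planeTranslate hδ.le
        (cthickening_subset_of_subset δ hface (mem_filter.1 hz).2) (by simpa using hj))
    · simp
  have hfiber : ∀ w ∈ target, (#{z ∈ T | key z = w} : ℝ) ≤
      C0 * (#B : ℝ) ^ (1 - overlapExponent n k) := fun w hw => by
    refine le_trans ?_ (hov.card_filter_subset_planeTranslate_le hC0 hk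
      (by simpa using (mem_product.1 hw).1) (fun j => δ * ((w.2 j : ℝ) + 1 / 2)) B)
    refine Nat.cast_le.2 (card_le_card fun z hz => ?_)
    obtain ⟨hzT, rfl⟩ := mem_filter.1 hz
    refine mem_filter.2 ⟨(mem_filter.1 hzT).1, rfl, kFace_subset_planeTranslate fun j hj => ?_⟩
    simp only [key, if_pos hj, hc]
  have hcard : #target ≤ 6 ^ n := by
    calc #target ≤ 2 ^ n * 3 ^ n := by
          rw [card_product, Fintype.card_piFinset]
          gcongr
          · exact (card_filter_le _ _).trans (by simp)
          · simp [show ∀ a : ℤ, a + 2 + 1 - a = 3 by intro; ring]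
      _ = 6 ^ n := by rw [← mul_pow]; norm_num
  calc (#T : ℝ) = ∑ w ∈ target, (#{z ∈ T | key z = w} : ℝ) := by
        exact_mod_cast card_eq_sum_card_fiberwise hmaps
    _ ≤ ∑ _w ∈ target, C0 * (#B : ℝ) ^ (1 - overlapExponent n k) := sum_le_sum hfiber
    _ ≤ 6 ^ n * C0 * (#B : ℝ) ^ (1 - overlapExponent n k) := by
        rw [sum_const, nsmul_eq_mul, mul_assoc]
        gcongr
        exact_mod_cast hcard

end LinearizedFaces

/-- The grid cube `Q₀(z)` of side `δ`. -/
def gridCube {n : ℕ} (δ : ℝ) {m : ℕ} (z : Fin n → Fin m) : Set (Fin n → ℝ) :=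
  univ.pi fun j => Ico (δ * (z j : ℝ)) (δ * ((z j : ℝ) + 1))

section Grid

variable {n : ℕ} {δ : ℝ} {m : ℕ}

theorem measurableSet_gridCube (δ : ℝ) (z : Fin n → Fin m) : MeasurableSet (gridCube δ z) :=
  MeasurableSet.univ_pi fun _ => measurableSet_Ico

theorem mem_Ico_mul_iff_floor_eq (hδ : 0 < δ) (i : ℕ) (t : ℝ) :
    t ∈ Ico (δ * i) (δ * (i + 1)) ↔ ⌊t / δ⌋ = i := by
  rw [Int.floor_eq_iff, le_div_iff₀ hδ, div_lt_iff₀ hδ, mem_Ico]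
  push_cast
  constructor <;> rintro ⟨h1, h2⟩ <;> constructor <;> linarith

theorem mem_Ico_mul_iff (hδ : 0 < δ) (hδm : δ * m = 1) (i : Fin m) (t : ℝ) :
    t ∈ Ico (δ * i) (δ * (i + 1)) ↔ t ∈ Ico (0 : ℝ) 1 ∧ (⌊t / δ⌋.toNat % m = i) := by
  rw [mem_Ico_mul_iff_floor_eq hδ]
  constructor
  · intro h
    have hi : (i : ℝ) + 1 ≤ m := by exact_mod_cast i.2
    have ht := (mem_Ico_mul_iff_floor_eq hδ i t).2 h
    refine ⟨⟨?_, ?_⟩, by rw [h, Int.toNat_natCast, Nat.mod_eq_of_lt i.2]⟩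
    · exact (mul_nonneg hδ.le (Nat.cast_nonneg _)).trans ht.1
    · calc t < δ * ((i : ℝ) + 1) := ht.2
        _ ≤ δ * m := mul_le_mul_of_nonneg_left hi hδ.le
        _ = 1 := hδm
  · rintro ⟨⟨h0, h1⟩, hi⟩
    have hlt : ⌊t / δ⌋ < m := by
      rw [Int.floor_lt, div_lt_iff₀ hδ]; push_cast; linarith
    have h0' : 0 ≤ ⌊t / δ⌋ := Int.floor_nonneg.2 (div_nonneg h0 hδ.le)
    rw [Nat.mod_eq_of_lt (by omega)] at hi
    omega

theorem gridCube_eq (hδ : 0 < δ) (hm : 0 < m) (hδm : δ * m = 1) (z : Fin n → Fin m) :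
    gridCube δ z = Q0 n ∩ zOf δ hm ⁻¹' {z} := by
  ext x
  simp only [gridCube, Q0, mem_inter_iff, mem_preimage, mem_singleton_iff, mem_univ_pi,
    funext_iff, zOf, Fin.ext_iff, ← forall_and]
  exact forall_congr' fun j => mem_Ico_mul_iff hδ hδm (z j) (x j)

theorem volume_gridCube (hδ : 0 ≤ δ) (z : Fin n → Fin m) :
    volume (gridCube δ z) = ENNReal.ofReal (δ ^ n) := by
  simp only [gridCube, volume_pi_pi, Real.volume_Ico, mul_add, mul_one, add_sub_cancel_left,
    Finset.prod_const, Finset.card_univ, Fintype.card_fin, ENNReal.ofReal_pow hδ]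

theorem lintegral_Q0_eq_sum_gridCube (hδ : 0 < δ) (hm : 0 < m) (hδm : δ * m = 1)
    (F : (Fin n → ℝ) → ENNReal) :
    ∫⁻ x in Q0 n, F x = ∑ z : Fin n → Fin m, ∫⁻ x in gridCube δ z, F x := by
  have hQ0 : Q0 n = ⋃ z : Fin n → Fin m, gridCube δ z := by
    simp only [gridCube_eq hδ hm hδm, ← inter_iUnion, ← preimage_iUnion, iUnion_of_singleton,
      preimage_univ, inter_univ]
  have hdisj : Pairwise (Function.onFun Disjoint (gridCube (n := n) (m := m) δ)) := by
    intro z z' hzz'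
    simp only [Function.onFun, gridCube_eq hδ hm hδm]
    exact ((disjoint_singleton.2 hzz').preimage _).mono inter_subset_right inter_subset_right
  rw [hQ0, lintegral_iUnion (measurableSet_gridCube δ) hdisj, tsum_fintype]

theorem lintegral_Q0_linMax_rpow (hδ : 0 < δ) (hm : 0 < m) (hδm : δ * m = 1)
    (ρ : (Fin n → Fin m) → ℝ) (S : (Fin n → Fin m) → Finset (Fin n))
    (ε : (Fin n → Fin m) → Fin n → Bool) (f : (Fin n → ℝ) → ℝ) {q : ℝ} (hq : 0 ≤ q) :
    ∫⁻ x in Q0 n, ‖linMax δ hm ρ S ε f x‖ₑ ^ q = ENNReal.ofReal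
      (δ ^ n * ∑ z, (⨍ y in cthickening δ (linFace δ ρ S ε z), |f y|) ^ q) := by
  rw [lintegral_Q0_eq_sum_gridCube hδ hm hδm, Finset.mul_sum, ENNReal.ofReal_sum_of_nonneg
    fun z _ => mul_nonneg (by positivity) (Real.rpow_nonneg (setAverage_abs_nonneg _ _ _) q)]
  refine Finset.sum_congr rfl fun z _ => ?_
  have hconst : ∀ x ∈ gridCube δ z, ‖linMax δ hm ρ S ε f x‖ₑ ^ q =
      ENNReal.ofReal ((⨍ y in cthickening δ (linFace δ ρ S ε z), |f y|) ^ q) := fun x hx => by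
    rw [linMax, ((gridCube_eq hδ hm hδm z ▸ hx).2 : zOf δ hm x = z),
      Real.enorm_of_nonneg (setAverage_abs_nonneg _ _ _),
      ENNReal.ofReal_rpow_of_nonneg (setAverage_abs_nonneg _ _ _) hq]
  rw [setLIntegral_congr_fun (measurableSet_gridCube δ z) hconst,
    setLIntegral_const, volume_gridCube hδ.le,
    ← ENNReal.ofReal_mul (Real.rpow_nonneg (setAverage_abs_nonneg _ _ _) q), mul_comm]

end Grid

theorem linMax_strong_bound_high_general (n k : ℕ) (hk : k < n)
    (p q : ℝ) (hp : 1 < p)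
    (hq : 2 * (n : ℝ) ^ 2 / (((n : ℝ) - k) * (2 * (n : ℝ) - 1)) * p < q)
    (C0 : ℝ) (hC0 : 0 < C0) :
    ∃ C > 0, ∀ δ ∈ Set.Ioo (0 : ℝ) 1, ∀ (m : ℕ) (hm : 0 < m), δ * m = 1 →
      ∀ (ρ : (Fin n → Fin m) → ℝ),
        (∀ z, ρ z ∈ Set.Icc (1 : ℝ) 2 ∧ ∃ t : ℤ, ρ z = δ * t) →
      ∀ (S : (Fin n → Fin m) → Finset (Fin n)), (∀ z, (S z).card = n - k) →
      ∀ (ε : (Fin n → Fin m) → Fin n → Bool), OverlapProp k δ ρ S ε C0 →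
      ∀ f : (Fin n → ℝ) → ℝ, MemLp f (ENNReal.ofReal p) volume →
        eLpNorm (linMax δ hm ρ S ε f) (ENNReal.ofReal q) (volume.restrict (Q0 n)) ≤
          ENNReal.ofReal (C * δ ^ ((n : ℝ) / q + ((k : ℝ) - n) / p)) *
            eLpNorm f (ENNReal.ofReal p) volume := by
  have hp0 : 0 < p := by linarith
  have hs := one_lt_div_mul_overlapExponent hk hp0 hq
  have hq0 : 0 < q := (div_pos_iff_of_pos_right hp0).1
    (pos_of_mul_pos_left (one_pos.trans hs) (overlapExponent_pos hk).le)
  have hsum := summable_nat_add_one_rpow_neg hs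
  set K := ∑' j : ℕ, ((j : ℝ) + 1) ^ (-(q / p * overlapExponent n k))
  have hK : 0 < K := hsum.tsum_pos (fun j => by positivity) 0 (by positivity)
  refine ⟨(K * (6 ^ n * C0 / 2 ^ n) ^ (q / p)) ^ q⁻¹, by positivity, ?_⟩
  rintro δ ⟨hδ, -⟩ m hm hδm ρ hρ S hS ε hov f hf
  have hbound := sum_setAverage_rpow_le (fun _ => isClosed_cthickening.measurableSet)
    (fun _ => isBounded_kFace.cthickening.measure_lt_top.ne) (w := 2 ^ n * δ ^ (n - k))
    (by positivity) (fun z => hS z ▸ ofReal_le_volume_cthickening_kFace hδ.le (hρ z).1.1)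
    (by positivity) (card_filter_mem_cthickening_linFace_le hk.le hδ (fun z => (hρ z).2) hS
      hC0.le hov) hp.le (div_pos hq0 hp0) hf
  rw [mul_div_cancel₀ _ hp0.ne'] at hbound
  rw [hf.eLpNorm_eq_integral_rpow_norm (by simpa using hp0) ENNReal.ofReal_ne_top,
    eLpNorm_eq_lintegral_rpow_enorm_toReal (by simpa using hq0) ENNReal.ofReal_ne_top,
    ENNReal.toReal_ofReal hp0.le, ENNReal.toReal_ofReal hq0.le, one_div,
    ENNReal.rpow_inv_le_iff hq0, lintegral_Q0_linMax_rpow hδ hm hδm ρ S ε f hq0.le,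
    ← ENNReal.ofReal_mul (by positivity), ENNReal.ofReal_rpow_of_nonneg (by positivity) hq0.le]
  refine ENNReal.ofReal_le_ofReal ?_
  simp only [Real.norm_eq_abs]
  calc δ ^ n * ∑ z, (⨍ y in cthickening δ (linFace δ ρ S ε z), |f y|) ^ q
      ≤ δ ^ n * ((6 ^ n * C0 * (∫ y, |f y| ^ p) / (2 ^ n * δ ^ (n - k))) ^ (q / p) * K) := by
        gcongr
        exact hbound.trans (by gcongr; exact hsum.sum_le_tsum _ fun j _ => by positivity)
    _ = _ := pow_mul_rpow_div_eq hk.le hδ hp0 hq0 (by positivity)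
        (integral_nonneg fun _ => by positivity) hK.le

/-- strong `L^p → L^q(Q₀)` bound for the linearized operator, `q > q*·p`.
If the face selection has the overlap property with constant `C₀ = C₀(n,k)`, then there is
`C' = C'(k,n,p,q) > 0` such that for every `f ∈ L^p(ℝⁿ)`,
`‖M̃^k_{ρ,δ} f‖_{L^q(Q₀)} ≤ C δ^{n/q + (k-n)/p} ‖f‖_{L^p}`. -/
theorem linMax_strong_bound_high (n k : ℕ) (hn : 2 ≤ n) (hk : k < n)
    (p q : ℝ) (hp : 1 < p) (hpq : p ≤ q)
    (hq : 2 * (n : ℝ) ^ 2 / (((n : ℝ) - k) * (2 * (n : ℝ) - 1)) * p < q)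
    (C0 : ℝ) (hC0 : 0 < C0) :
    ∃ C > 0, ∀ δ ∈ Set.Ioo (0 : ℝ) 1, ∀ (m : ℕ) (hm : 0 < m), δ * m = 1 →
      ∀ (ρ : (Fin n → Fin m) → ℝ),
        (∀ z, ρ z ∈ Set.Icc (1 : ℝ) 2 ∧ ∃ t : ℤ, ρ z = δ * t) →
      ∀ (S : (Fin n → Fin m) → Finset (Fin n)), (∀ z, (S z).card = n - k) →
      ∀ (ε : (Fin n → Fin m) → Fin n → Bool), OverlapProp k δ ρ S ε C0 →
      ∀ f : (Fin n → ℝ) → ℝ, MemLp f (ENNReal.ofReal p) volume →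
        eLpNorm (linMax δ hm ρ S ε f) (ENNReal.ofReal q) (volume.restrict (Q0 n)) ≤
          ENNReal.ofReal (C * δ ^ ((n : ℝ) / q + ((k : ℝ) - n) / p)) *
            eLpNorm f (ENNReal.ofReal p) volume :=
  linMax_strong_bound_high_general n k hk p q hp hq C0 hC0
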